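/- Let G be a simple graph with partial 8-edge-coloring π and let e = xy be an uncolored edge of type 2_{ab} with witnesses c ∈ π̄(x)∖{b} and common neighbor z of x and y such that π(yz) = c, π(xz) = a, and xz does not belong to an (a,b)-cycle. Then swapping the colors of the edges yz and xz (coloring yz with a and xz with c) yields a proper partial 8-edge-coloring σ with the same colored set as π, in which a ∈ σ̄(x), b ∈ σ̄(y), and x is not an endpoint of the (a,b)-chain (with respect to σ) containing y; that is, e has type 1_{ab} with respect to σ. -/

import Mathlib

open SimpleGraph

open scoped Classical in
/-- `π` is a proper partial `D`-edge-coloring of `G`: it assigns `none` outside the edge set,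
and distinct incident edges receive different colors. -/
def IsProperPEC {V : Type} (G : SimpleGraph V) (D : ℕ) (π : Sym2 V → Option (Fin D)) : Prop :=
  (∀ e, π e ≠ none → e ∈ G.edgeSet) ∧
    ∀ e₁ e₂ : Sym2 V, e₁ ≠ e₂ → (∃ v, v ∈ e₁ ∧ v ∈ e₂) → π e₁ ≠ none → π e₁ ≠ π e₂

/-- Number of neighbors of `x` having degree `8`. -/
def deg8Nbrs {V : Type} [Fintype V] [DecidableEq V] (G : SimpleGraph V) [DecidableRel G.Adj]
    (x : V) : ℕ :=
  ((G.neighborFinset x).filter (fun w => G.degree w = 8)).card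

/-- The edge `xy` is `x`-weak. -/
def IsXWeak {V : Type} [Fintype V] [DecidableEq V] (G : SimpleGraph V) [DecidableRel G.Adj]
    (x y : V) : Prop :=
  deg8Nbrs G x ≤ 8 - G.degree y + (if G.degree y = 8 then 1 else 0)

/-- The edge `e` is weak: `e = xy` with `xy` `x`-weak or `y`-weak. -/
def IsWeakEdge {V : Type} [Fintype V] [DecidableEq V] (G : SimpleGraph V) [DecidableRel G.Adj]
    (e : Sym2 V) : Prop :=
  ∃ x y : V, e = s(x, y) ∧ G.Adj x y ∧ (IsXWeak G x y ∨ IsXWeak G y x)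

/-- A butterfly of the first kind with the given vertices. -/
def IsButterflyB1 {V : Type} [Fintype V] [DecidableEq V] (G : SimpleGraph V) [DecidableRel G.Adj]
    (x y z v₁ v₂ v₃ : V) : Prop :=
  List.Pairwise (· ≠ ·) [x, y, z, v₁, v₂, v₃] ∧
  G.Adj x y ∧ G.Adj x z ∧ G.Adj y v₁ ∧ G.Adj y v₃ ∧ G.Adj z v₁ ∧ G.Adj z v₂ ∧
  G.Adj x v₁ ∧ G.Adj x v₂ ∧ G.Adj x v₃ ∧
  G.degree y = 3 ∧ G.degree z = 3 ∧ G.degree x = 8 ∧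
  G.degree v₁ = 8 ∧ G.degree v₂ = 8 ∧ G.degree v₃ = 8

/-- A butterfly of the second kind with the given vertices. -/
def IsButterflyB2 {V : Type} [Fintype V] [DecidableEq V] (G : SimpleGraph V) [DecidableRel G.Adj]
    (x y z v₁ v₂ v₃ v₄ : V) : Prop :=
  List.Pairwise (· ≠ ·) [x, y, z, v₁, v₂, v₃, v₄] ∧
  G.Adj x y ∧ G.Adj x z ∧ G.Adj y v₁ ∧ G.Adj y v₄ ∧ G.Adj z v₂ ∧ G.Adj z v₃ ∧
  G.Adj x v₁ ∧ G.Adj x v₂ ∧ G.Adj x v₃ ∧ G.Adj x v₄ ∧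
  G.degree y = 3 ∧ G.degree z = 3 ∧ G.degree x = 8 ∧
  G.degree v₁ = 8 ∧ G.degree v₂ = 8 ∧ G.degree v₃ = 8 ∧ G.degree v₄ = 8

/-- The pair `(x, y)` is the distinguished edge `xy` of some butterfly of `G`. -/
def IsButterflyLikeAt {V : Type} [Fintype V] [DecidableEq V] (G : SimpleGraph V)
    [DecidableRel G.Adj] (x y : V) : Prop :=
  (∃ z v₁ v₂ v₃, IsButterflyB1 G x y z v₁ v₂ v₃) ∨
  (∃ z v₁ v₂ v₃ v₄, IsButterflyB2 G x y z v₁ v₂ v₃ v₄)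

/-- The edge `e` is butterfly-like. -/
def IsButterflyLike {V : Type} [Fintype V] [DecidableEq V] (G : SimpleGraph V)
    [DecidableRel G.Adj] (e : Sym2 V) : Prop :=
  ∃ x y : V, e = s(x, y) ∧ IsButterflyLikeAt G x y

/-- An edge is reducible when it is weak or butterfly-like. -/
def IsReducible {V : Type} [Fintype V] [DecidableEq V] (G : SimpleGraph V) [DecidableRel G.Adj]
    (e : Sym2 V) : Prop :=
  IsWeakEdge G e ∨ IsButterflyLike G e

/-- Reversal of darts, as a permutation. -/
def dartRev {V : Type} (G : SimpleGraph V) : Equiv.Perm G.Dart :=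
  ⟨SimpleGraph.Dart.symm, SimpleGraph.Dart.symm,
    fun d => SimpleGraph.Dart.symm_symm d, fun d => SimpleGraph.Dart.symm_symm d⟩

/-- `ρ` is a rotation system of `G`: it permutes the darts around each vertex
in a single cycle. -/
def IsRotationSystem {V : Type} (G : SimpleGraph V) (ρ : Equiv.Perm G.Dart) : Prop :=
  (∀ d : G.Dart, (ρ d).fst = d.fst) ∧
    ∀ d d' : G.Dart, d.fst = d'.fst → ρ.SameCycle d d'

/-- The face permutation of a rotation system. -/
def facePerm {V : Type} (G : SimpleGraph V) (ρ : Equiv.Perm G.Dart) : Equiv.Perm G.Dart :=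
  (dartRev G).trans ρ

/-- The setoid of darts whose classes are the faces of a combinatorial embedding. -/
def faceSetoid {V : Type} (G : SimpleGraph V) (ρ : Equiv.Perm G.Dart) : Setoid G.Dart :=
  ⟨(facePerm G ρ).SameCycle, Equiv.Perm.SameCycle.equivalence _⟩

/-- The number of faces of a combinatorial embedding. -/
noncomputable def numFaces {V : Type} (G : SimpleGraph V) (ρ : Equiv.Perm G.Dart) : ℕ :=
  Nat.card (Quotient (faceSetoid G ρ))

/-- The number of isolated vertices of `G`. -/
noncomputable def numIsolated {V : Type} (G : SimpleGraph V) : ℕ :=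
  Nat.card {v : V // ∀ w, ¬ G.Adj v w}

/-- The number of connected components of `G`. -/
noncomputable def numComponents {V : Type} (G : SimpleGraph V) : ℕ :=
  Nat.card G.ConnectedComponent

/-- `G` is embeddable in an orientable surface of genus at most `g`: it has a combinatorial
embedding (rotation system) whose Euler characteristic, summed over components, is at least
`2 * (number of components) - 2 * g`. -/
def GenusLE {V : Type} (G : SimpleGraph V) (g : ℕ) : Prop :=
  ∃ ρ : Equiv.Perm G.Dart, IsRotationSystem G ρ ∧
    2 * (numComponents G : ℤ) - 2 * (g : ℤ) ≤
      (Nat.card V : ℤ) - (Nat.card G.edgeSet : ℤ) + ((numFaces G ρ + numIsolated G : ℕ) : ℤ)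

/-- `G` is planar: it is embeddable in an orientable surface of genus `0`, i.e. the sphere. -/
def IsPlanar {V : Type} (G : SimpleGraph V) : Prop := GenusLE G 0

/-- Color `c` is free at `v` (no colored edge incident to `v` has color `c`). -/
def freeAt {V : Type} {D : ℕ} (π : Sym2 V → Option (Fin D)) (v : V) (c : Fin D) : Prop :=
  ∀ e : Sym2 V, v ∈ e → π e ≠ some c

/-- The graph formed by the edges colored `a` or `b`; its components are the `(a,b)`-chains. -/
def chainGraph {V : Type} {D : ℕ} (π : Sym2 V → Option (Fin D)) (a b : Fin D) : SimpleGraph V :=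
  SimpleGraph.fromEdgeSet {e | π e = some a ∨ π e = some b}

/-- `u` and `v` lie on the same `(a,b)`-chain. -/
def chainReach {V : Type} {D : ℕ} (π : Sym2 V → Option (Fin D)) (a b : Fin D) (u v : V) : Prop :=
  (chainGraph π a b).Reachable u v

/-- `v` is an endpoint of its `(a,b)`-chain (it has at most one neighbor on the chain). -/
def chainEndpoint {V : Type} {D : ℕ} (π : Sym2 V → Option (Fin D)) (a b : Fin D) (v : V) : Prop :=
  ((chainGraph π a b).neighborSet v).Subsingleton

/-- There is an `(a,b)`-chain with endpoints `u` and `v`. -/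
def chainPathEndpoints {V : Type} {D : ℕ} (π : Sym2 V → Option (Fin D)) (a b : Fin D)
    (u v : V) : Prop :=
  u ≠ v ∧ chainReach π a b u v ∧ chainEndpoint π a b u ∧ chainEndpoint π a b v

/-- The `(a,b)`-chain containing `x` is a cycle (no vertex of it is an endpoint). -/
def inChainCycle {V : Type} {D : ℕ} (π : Sym2 V → Option (Fin D)) (a b : Fin D) (x : V) : Prop :=
  ∀ v, chainReach π a b x v → ¬ chainEndpoint π a b v

/-- The vertex `w` is at distance at most `k` from the edge `e`. -/
def vtxEdgeDistLE {V : Type} (G : SimpleGraph V) (k : ℕ) (w : V) (e : Sym2 V) : Prop :=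
  ∃ u, u ∈ e ∧ ∃ p : G.Walk w u, p.length ≤ k

/-- The edges `e₁` and `e₂` are at distance at most `k` from each other. -/
def edgeDistLE {V : Type} (G : SimpleGraph V) (k : ℕ) (e₁ e₂ : Sym2 V) : Prop :=
  ∃ u, u ∈ e₁ ∧ vtxEdgeDistLE G k u e₂

/-- The uncolored edge `xy` has type 0: `π` can be turned into a coloring additionally coloring
`xy` by recoloring only edges at distance at most 1 from `xy`. -/
def HasType0 {V : Type} (G : SimpleGraph V) (π : Sym2 V → Option (Fin 8)) (x y : V) : Prop :=
  ∃ σ : Sym2 V → Option (Fin 8), IsProperPEC G 8 σ ∧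
    (∀ e, σ e ≠ none ↔ (π e ≠ none ∨ e = s(x, y))) ∧
    (∀ e, ¬ edgeDistLE G 1 e s(x, y) → σ e = π e)

/-- The uncolored edge `xy` has type `1_{ab}`. -/
def HasType1 {V : Type} (π : Sym2 V → Option (Fin 8)) (x y : V) (a b : Fin 8) : Prop :=
  freeAt π x a ∧ freeAt π y b ∧ ¬ (chainReach π a b x y ∧ chainEndpoint π a b x)

/-- The uncolored edge `xy` has type `2_{ab}`. -/
def HasType2 {V : Type} (G : SimpleGraph V) (π : Sym2 V → Option (Fin 8)) (x y : V)
    (a b : Fin 8) : Prop :=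
  freeAt π y a ∧ freeAt π y b ∧
  ∃ c : Fin 8, c ≠ b ∧ freeAt π x c ∧
    ∃ z : V, G.Adj x z ∧ G.Adj y z ∧ π s(y, z) = some c ∧ π s(x, z) = some a ∧
      ¬ inChainCycle π a b x

/-- The uncolored edge `xy` has type `3_{ab}`. -/
def HasType3 {V : Type} (G : SimpleGraph V) (π : Sym2 V → Option (Fin 8)) (x y : V)
    (a b : Fin 8) : Prop :=
  freeAt π x a ∧ freeAt π y b ∧ chainPathEndpoints π a b x y ∧
  ∃ c : Fin 8, c ≠ b ∧ freeAt π y c ∧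
    ∃ z : V, G.Adj x z ∧ freeAt π z b ∧ π s(x, z) = some c

/-- The uncolored edge `xy` has type `4_{ab}`. -/
def HasType4 {V : Type} (G : SimpleGraph V) (π : Sym2 V → Option (Fin 8)) (x y : V)
    (a b : Fin 8) : Prop :=
  freeAt π y a ∧ freeAt π y b ∧ inChainCycle π a b x ∧
  ∃ c : Fin 8, freeAt π x c ∧
    ∃ z v : V, z ≠ v ∧ z ≠ x ∧ z ≠ y ∧ v ≠ x ∧ v ≠ y ∧
      G.Adj x v ∧ G.Adj z v ∧ π s(x, v) = some a ∧ π s(z, v) = some c ∧ freeAt π z b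

/-- The uncolored edge `xy` has type `5_{ab}`. -/
def HasType5 {V : Type} (G : SimpleGraph V) (π : Sym2 V → Option (Fin 8)) (x y : V)
    (a b : Fin 8) : Prop :=
  freeAt π y a ∧ freeAt π x b ∧ chainPathEndpoints π a b x y ∧
  ∃ c : Fin 8, c ≠ a ∧ freeAt π y c ∧
    ∃ z v : V, z ≠ v ∧ z ≠ x ∧ z ≠ y ∧ v ≠ x ∧ v ≠ y ∧
      G.Adj x v ∧ G.Adj z v ∧ π s(x, v) = some c ∧ π s(z, v) = some a ∧
      freeAt π z b ∧ freeAt π z c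

/-- The uncolored edge `xy` has type `6_{abcd}`. -/
def HasType6 {V : Type} (G : SimpleGraph V) (π : Sym2 V → Option (Fin 8)) (x y : V)
    (a b c d : Fin 8) : Prop :=
  freeAt π y a ∧ freeAt π y c ∧ freeAt π y d ∧ freeAt π x b ∧
  chainPathEndpoints π a b x y ∧ inChainCycle π c d x ∧
  ∃ z v₁ v₂ : V, z ≠ v₁ ∧ z ≠ v₂ ∧ v₁ ≠ v₂ ∧ z ≠ x ∧ z ≠ y ∧ v₁ ≠ x ∧ v₁ ≠ y ∧ v₂ ≠ x ∧ v₂ ≠ y ∧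
    G.Adj x v₁ ∧ G.Adj x v₂ ∧ G.Adj z v₁ ∧ G.Adj z v₂ ∧
    π s(x, v₁) = some c ∧ π s(x, v₂) = some a ∧ π s(z, v₁) = some a ∧ π s(z, v₂) = some c ∧
    freeAt π z b ∧ freeAt π z d

/-!
Swapping is proper because `a` was free at `y`, `c` was free at `x`, and at `z` the two colors
merely trade places. After the swap `yz` is the only `(a,b)`-edge at `y`, so an `(a,b)`-chain
joining `x` and `y` would yield an `(a,b)`-path of `π` from `z` to `x` avoiding `xz`; with `xz`
(colored `a` by `π`) it closes a cycle through `x`. Since `(a,b)`-chains have maximum degree two,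
that cycle is the whole chain of `x`, contradicting that `xz` is not on an `(a,b)`-cycle.
-/

namespace SimpleGraph

variable {V : Type} {H : SimpleGraph V}

lemma Walk.IsCycle.neighborSet_eq {u v : V} {p : H.Walk u u} (hp : p.IsCycle)
    (hv : v ∈ p.support) (hdeg : (H.neighborSet v).encard ≤ 2) :
    H.neighborSet v = p.toSubgraph.neighborSet v := by
  have htwo := hp.ncard_neighborSet_toSubgraph_eq_two hv
  have hfin : (p.toSubgraph.neighborSet v).Finite := Set.finite_of_ncard_pos (by omega)
  refine (hfin.eq_of_subset_of_encard_le (fun w hw => p.toSubgraph.adj_sub hw) ?_).symm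
  rw [← hfin.cast_ncard_eq, htwo]
  exact hdeg

lemma Walk.IsCycle.not_subsingleton_neighborSet {u v : V} {p : H.Walk u u} (hp : p.IsCycle)
    (hv : v ∈ p.support) : ¬ (H.neighborSet v).Subsingleton := by
  intro hsub
  obtain ⟨w₁, w₂, hne, hpair⟩ := Set.ncard_eq_two.mp (hp.ncard_neighborSet_toSubgraph_eq_two hv)
  have hmem : ∀ w ∈ p.toSubgraph.neighborSet v, w ∈ H.neighborSet v :=
    fun w hw => p.toSubgraph.adj_sub hw
  exact hne (hsub (hmem w₁ (by simp [hpair])) (hmem w₂ (by simp [hpair])))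

lemma Walk.IsCycle.mem_support_of_reachable {u v w : V} {p : H.Walk u u} (hp : p.IsCycle)
    (hdeg : ∀ t, (H.neighborSet t).encard ≤ 2) (hv : v ∈ p.support) (hvw : H.Reachable v w) :
    w ∈ p.support := by
  obtain ⟨q⟩ := hvw
  induction q with
  | nil => exact hv
  | @cons s t _ hadj _ ih =>
    have hadj' : p.toSubgraph.Adj s t := by
      rw [← Subgraph.mem_neighborSet, ← hp.neighborSet_eq hv (hdeg _)]
      exact hadj
    exact ih (p.mem_verts_toSubgraph.mp hadj'.snd_mem)

lemma not_subsingleton_neighborSet_of_reachable_deleteEdges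
    (hdeg : ∀ t, (H.neighborSet t).encard ≤ 2) {x z v : V} (hxz : H.Adj x z)
    (hcyc : (H.deleteEdges {s(x, z)}).Reachable x z) (hxv : H.Reachable x v) :
    ¬ (H.neighborSet v).Subsingleton := by
  obtain ⟨u, p, hp, he⟩ := adj_and_reachable_delete_edges_iff_exists_cycle.mp ⟨hxz, hcyc⟩
  exact hp.not_subsingleton_neighborSet
    (hp.mem_support_of_reachable hdeg (p.fst_mem_support_of_mem_edges he) hxv)

/-- A path from `x` to `y` enters `y` through `z`, so the part of it before `z` avoids `yz`. -/
lemma reachable_deleteEdges_of_forall_adj_eq {x y z : V} (hy : ∀ u, H.Adj y u → u = z)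
    (hxy : x ≠ y) (h : H.Reachable x y) : (H.deleteEdges {s(y, z)}).Reachable x z := by
  classical
  obtain ⟨⟨p, hp⟩⟩ : Nonempty (H.Path y x) := ⟨h.symm.some.toPath⟩
  cases p with
  | nil => exact absurd rfl hxy
  | cons hadj q =>
    obtain rfl := hy _ hadj
    have hyq : y ∉ q.support := ((Walk.cons_isPath_iff _ _).mp hp).2
    exact (q.toDeleteEdge s(y, _) fun he => hyq (q.fst_mem_support_of_mem_edges he)).reachable.symm

end SimpleGraph

section Coloring

variable {V : Type} {G : SimpleGraph V} {D : ℕ} {π σ : Sym2 V → Option (Fin D)}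

lemma freeAt.notMem {v : V} {k : Fin D} {e : Sym2 V} (hv : freeAt π v k) (he : π e = some k) :
    v ∉ e :=
  fun hve => hv e hve he

lemma freeAt.ne {v : V} {k k' : Fin D} {e : Sym2 V} (hv : freeAt π v k) (hve : v ∈ e)
    (he : π e = some k') : k' ≠ k := by
  rintro rfl
  exact hv e hve he

lemma IsProperPEC.adj (hπ : IsProperPEC G D π) {u w : V} {k : Fin D} (h : π s(u, w) = some k) :
    G.Adj u w :=
  hπ.1 s(u, w) (by simp [h])

lemma IsProperPEC.eq_of_mem (hπ : IsProperPEC G D π) {v : V} {e₁ e₂ : Sym2 V} {k : Fin D}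
    (h₁ : v ∈ e₁) (h₂ : v ∈ e₂) (hk₁ : π e₁ = some k) (hk₂ : π e₂ = some k) : e₁ = e₂ := by
  by_contra hne
  exact hπ.2 e₁ e₂ hne ⟨v, h₁, h₂⟩ (by simp [hk₁]) (hk₁.trans hk₂.symm)

lemma isProperPEC_of_eq_of_mem (hG : ∀ e, σ e ≠ none → e ∈ G.edgeSet)
    (h : ∀ {v : V} {e₁ e₂ : Sym2 V} {k : Fin D},
      v ∈ e₁ → v ∈ e₂ → σ e₁ = some k → σ e₂ = some k → e₁ = e₂) :
    IsProperPEC G D σ := by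
  refine ⟨hG, fun e₁ e₂ hne ⟨v, h₁, h₂⟩ hcol heq => hne ?_⟩
  obtain ⟨k, hk⟩ := Option.ne_none_iff_exists'.mp hcol
  exact h h₁ h₂ hk (heq ▸ hk)

lemma chainGraph_adj {a b : Fin D} {u w : V} :
    (chainGraph π a b).Adj u w ↔ (π s(u, w) = some a ∨ π s(u, w) = some b) ∧ u ≠ w := by
  simp [chainGraph]

lemma IsProperPEC.encard_neighborSet_chainGraph_le (hπ : IsProperPEC G D π) (a b : Fin D)
    (v : V) : ((chainGraph π a b).neighborSet v).encard ≤ 2 := by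
  have hinj : Set.InjOn (fun w => π s(v, w)) ((chainGraph π a b).neighborSet v) := by
    intro w₁ hw₁ w₂ _ heq
    obtain ⟨k, hk⟩ : ∃ k, π s(v, w₁) = some k := by
      rcases (chainGraph_adj.mp hw₁).1 with h | h <;> exact ⟨_, h⟩
    exact Sym2.congr_right.mp
      (hπ.eq_of_mem (Sym2.mem_mk_left _ _) (Sym2.mem_mk_left _ _) hk (heq.symm.trans hk))
  calc ((chainGraph π a b).neighborSet v).encard
      ≤ ({some a, some b} : Set (Option (Fin D))).encard :=
        Set.encard_le_encard_of_injOn (fun w hw => (chainGraph_adj.mp hw).1) hinj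
    _ ≤ 2 := (Set.encard_insert_le _ _).trans (by rw [Set.encard_singleton]; rfl)

lemma IsProperPEC.inChainCycle_of_reachable_deleteEdges (hπ : IsProperPEC G D π) {a b : Fin D}
    {x z : V} (hxz : (chainGraph π a b).Adj x z)
    (hcyc : ((chainGraph π a b).deleteEdges {s(x, z)}).Reachable x z) : inChainCycle π a b x :=
  fun _ hxv => SimpleGraph.not_subsingleton_neighborSet_of_reachable_deleteEdges
    (hπ.encard_neighborSet_chainGraph_le a b) hxz hcyc hxv

end Coloring

section ColorSwap

variable {V : Type} {G : SimpleGraph V} {D : ℕ} {π σ : Sym2 V → Option (Fin D)}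

structure IsColorSwap (π σ : Sym2 V → Option (Fin D)) (e₁ e₂ : Sym2 V) : Prop where
  apply_left : σ e₁ = π e₂
  apply_right : σ e₂ = π e₁
  apply_of_ne : ∀ e, e ≠ e₁ → e ≠ e₂ → σ e = π e

lemma IsColorSwap.symm {e₁ e₂ : Sym2 V} (hs : IsColorSwap π σ e₁ e₂) : IsColorSwap π σ e₂ e₁ :=
  ⟨hs.apply_right, hs.apply_left, fun e h₂ h₁ => hs.apply_of_ne e h₁ h₂⟩

lemma IsColorSwap.ne_none_iff {e₁ e₂ : Sym2 V} (hs : IsColorSwap π σ e₁ e₂) (h₁ : π e₁ ≠ none)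
    (h₂ : π e₂ ≠ none) (e : Sym2 V) : σ e ≠ none ↔ π e ≠ none := by
  by_cases he₁ : e = e₁
  · rw [he₁, hs.apply_left]
    exact iff_of_true h₂ h₁
  by_cases he₂ : e = e₂
  · rw [he₂, hs.apply_right]
    exact iff_of_true h₁ h₂
  rw [hs.apply_of_ne e he₁ he₂]

lemma IsColorSwap.eq_of_mem {u w v : V} {e' e : Sym2 V} {k : Fin D}
    (hs : IsColorSwap π σ s(u, w) e') (hπ : IsProperPEC G D π) (hw : w ∈ e')
    (hk : π e' = some k) (hu : freeAt π u k) (hne : π s(u, w) ≠ some k) (hv : v ∈ s(u, w))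
    (he : v ∈ e) (hσe : σ e = some k) : e = s(u, w) := by
  by_contra h₁
  have h₂ : e ≠ e' := by
    rintro rfl
    exact hne (hs.apply_right ▸ hσe)
  have hπe : π e = some k := hs.apply_of_ne e h₁ h₂ ▸ hσe
  rcases Sym2.mem_iff.mp hv with rfl | rfl
  · exact hu e he hπe
  · exact h₂ (hπ.eq_of_mem he hw hπe hk)

variable {x y z : V} {a b c : Fin D}

lemma IsColorSwap.isProperPEC (hπ : IsProperPEC G D π) (hs : IsColorSwap π σ s(y, z) s(x, z))
    (hyz : π s(y, z) = some c) (hxz : π s(x, z) = some a) (hya : freeAt π y a)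
    (hxc : freeAt π x c) : IsProperPEC G D σ := by
  have hac : a ≠ c := hxc.ne (Sym2.mem_mk_left _ _) hxz
  refine isProperPEC_of_eq_of_mem
    (fun e he => hπ.1 e ((hs.ne_none_iff (by simp [hyz]) (by simp [hxz]) e).mp he)) ?_
  intro v e₁ e₂ k h₁ h₂ hk₁ hk₂
  have hswapped : ∀ {e e'}, v ∈ e → v ∈ e' → σ e = some k → σ e' = some k →
      e = s(y, z) ∨ e = s(x, z) → e' = e := by
    rintro e e' he he' hk hk' (rfl | rfl)
    · obtain rfl : a = k := Option.some.inj (hxz ▸ hs.apply_left ▸ hk)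
      exact hs.eq_of_mem hπ (Sym2.mem_mk_right _ _) hxz hya (by simp [hyz, hac.symm]) he he' hk'
    · obtain rfl : c = k := Option.some.inj (hyz ▸ hs.apply_right ▸ hk)
      exact hs.symm.eq_of_mem hπ (Sym2.mem_mk_right _ _) hyz hxc (by simp [hxz, hac]) he he' hk'
  by_cases hsw₁ : e₁ = s(y, z) ∨ e₁ = s(x, z)
  · exact (hswapped h₁ h₂ hk₁ hk₂ hsw₁).symm
  by_cases hsw₂ : e₂ = s(y, z) ∨ e₂ = s(x, z)
  · exact hswapped h₂ h₁ hk₂ hk₁ hsw₂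
  simp only [not_or] at hsw₁ hsw₂
  rw [hs.apply_of_ne _ hsw₁.1 hsw₁.2] at hk₁
  rw [hs.apply_of_ne _ hsw₂.1 hsw₂.2] at hk₂
  exact hπ.eq_of_mem h₁ h₂ hk₁ hk₂

lemma IsColorSwap.freeAt_prev_color (hπ : IsProperPEC G D π)
    (hs : IsColorSwap π σ s(y, z) s(x, z)) (hyz : π s(y, z) = some c)
    (hxz : π s(x, z) = some a) (hxc : freeAt π x c) : freeAt σ x a := by
  intro e he hσe
  by_cases h₁ : e = s(y, z)
  · exact hxc.notMem hyz (h₁ ▸ he)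
  by_cases h₂ : e = s(x, z)
  · rw [h₂, hs.apply_right, hyz] at hσe
    exact hxc.ne (Sym2.mem_mk_left _ _) hxz (Option.some.inj hσe).symm
  exact h₂ (hπ.eq_of_mem he (Sym2.mem_mk_left _ _) (hs.apply_of_ne e h₁ h₂ ▸ hσe) hxz)

lemma IsColorSwap.freeAt_of_freeAt_of_ne (hs : IsColorSwap π σ s(y, z) s(x, z))
    (hxz : π s(x, z) = some a) (hya : freeAt π y a) (hyb : freeAt π y b) (hab : a ≠ b) :
    freeAt σ y b := by
  intro e he hσe
  by_cases h₁ : e = s(y, z)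
  · subst h₁
    exact hab (Option.some.inj (hxz ▸ hs.apply_left ▸ hσe))
  by_cases h₂ : e = s(x, z)
  · exact hya.notMem hxz (h₂ ▸ he)
  exact hyb e he (hs.apply_of_ne e h₁ h₂ ▸ hσe)

lemma IsColorSwap.eq_of_chainGraph_adj (hs : IsColorSwap π σ s(y, z) s(x, z))
    (hxz : π s(x, z) = some a) (hya : freeAt π y a) (hyb : freeAt π y b) {u : V}
    (hu : (chainGraph σ a b).Adj y u) : u = z := by
  by_contra hne
  have h₁ : s(y, u) ≠ s(y, z) := fun h => hne (Sym2.congr_right.mp h)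
  have h₂ : s(y, u) ≠ s(x, z) := fun h => hya.notMem hxz (h ▸ Sym2.mem_mk_left y u)
  rcases (chainGraph_adj.mp hu).1 with h | h <;> rw [hs.apply_of_ne _ h₁ h₂] at h
  · exact hya _ (Sym2.mem_mk_left _ _) h
  · exact hyb _ (Sym2.mem_mk_left _ _) h

lemma IsColorSwap.deleteEdges_chainGraph_le (hs : IsColorSwap π σ s(y, z) s(x, z))
    (hyz : π s(y, z) = some c) (hac : a ≠ c) (hcb : c ≠ b) :
    (chainGraph σ a b).deleteEdges {s(y, z)} ≤ (chainGraph π a b).deleteEdges {s(x, z)} := by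
  intro u w huw
  simp only [SimpleGraph.deleteEdges_adj, Set.mem_singleton_iff, chainGraph_adj] at huw ⊢
  have hne : s(u, w) ≠ s(x, z) := by
    intro h
    rw [h, hs.apply_right, hyz] at huw
    rcases huw.1.1 with h' | h'
    · exact hac (Option.some.inj h').symm
    · exact hcb (Option.some.inj h')
  rw [hs.apply_of_ne _ huw.2 hne] at huw
  exact ⟨huw.1, hne⟩

lemma IsColorSwap.not_chainReach (hπ : IsProperPEC G D π) (hs : IsColorSwap π σ s(y, z) s(x, z))
    (hyz : π s(y, z) = some c) (hxz : π s(x, z) = some a) (hya : freeAt π y a)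
    (hyb : freeAt π y b) (hxc : freeAt π x c) (hcb : c ≠ b) (hx : ¬ inChainCycle π a b x) :
    ¬ chainReach σ a b x y := by
  intro hreach
  have hxy : x ≠ y := fun h => hya.notMem hxz (h ▸ Sym2.mem_mk_left x z)
  have hpath : ((chainGraph π a b).deleteEdges {s(x, z)}).Reachable x z :=
    (SimpleGraph.reachable_deleteEdges_of_forall_adj_eq
      (fun _ => hs.eq_of_chainGraph_adj hxz hya hyb) hxy hreach).mono
      (hs.deleteEdges_chainGraph_le hyz (hxc.ne (Sym2.mem_mk_left _ _) hxz) hcb)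
  exact hx (hπ.inChainCycle_of_reachable_deleteEdges
    (chainGraph_adj.mpr ⟨Or.inl hxz, (hπ.adj hxz).ne⟩) hpath)

end ColorSwap

theorem stmt11_general {V : Type} [DecidableEq V] (G : SimpleGraph V)
    (π : Sym2 V → Option (Fin 8)) (hπ : IsProperPEC G 8 π)
    (x y z : V) (a b c : Fin 8) (hab : a ≠ b) (hcb : c ≠ b)
    (hya : freeAt π y a) (hyb : freeAt π y b) (hxc : freeAt π x c)
    (hπyz : π s(y, z) = some c) (hπxz : π s(x, z) = some a)
    (hnotcycle : ¬ inChainCycle π a b x) :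
    let σ : Sym2 V → Option (Fin 8) := fun e =>
      if e = s(y, z) then some a else if e = s(x, z) then some c else π e
    IsProperPEC G 8 σ ∧ (∀ e, σ e ≠ none ↔ π e ≠ none) ∧ HasType1 σ x y a b := by
  intro σ
  have hne : s(x, z) ≠ s(y, z) := fun h => hya.notMem hπxz (h ▸ Sym2.mem_mk_left y z)
  have hs : IsColorSwap π σ s(y, z) s(x, z) :=
    ⟨by simp [σ, hπxz], by simp [σ, hne, hπyz], fun e h₁ h₂ => by simp [σ, h₁, h₂]⟩
  exact ⟨hs.isProperPEC hπ hπyz hπxz hya hxc,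
    hs.ne_none_iff (by simp [hπyz]) (by simp [hπxz]),
    hs.freeAt_prev_color hπ hπyz hπxz hxc,
    hs.freeAt_of_freeAt_of_ne hπxz hya hyb hab,
    fun h => hs.not_chainReach hπ hπyz hπxz hya hyb hxc hcb hnotcycle h.1⟩

/-- Swapping the colors of `yz` and `xz` turns an edge of type `2_{ab}` into one of
type `1_{ab}` without changing the set of colored edges. -/
theorem stmt11 {V : Type} [DecidableEq V] (G : SimpleGraph V)
    (π : Sym2 V → Option (Fin 8)) (hπ : IsProperPEC G 8 π)
    (x y z : V) (a b c : Fin 8) (hab : a ≠ b) (hcb : c ≠ b)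
    (hxy : G.Adj x y) (huncol : π s(x, y) = none)
    (hya : freeAt π y a) (hyb : freeAt π y b) (hxc : freeAt π x c)
    (hxz : G.Adj x z) (hyz : G.Adj y z)
    (hπyz : π s(y, z) = some c) (hπxz : π s(x, z) = some a)
    (hnotcycle : ¬ inChainCycle π a b x) :
    let σ : Sym2 V → Option (Fin 8) := fun e =>
      if e = s(y, z) then some a else if e = s(x, z) then some c else π e
    IsProperPEC G 8 σ ∧ (∀ e, σ e ≠ none ↔ π e ≠ none) ∧ HasType1 σ x y a b :=
  stmt11_general G π hπ x y z a b c hab hcb hya hyb hxc hπyz hπxz hnotcycle
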